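/- For ω > 0 and c > 2ω, the map θ ↦ ξ(θ) = √(4c/(c-2ω)) θ + ln(cosh(θ - θ₀)/cosh(θ + θ₀)), with θ₀ = arctanh(√(1 - 2ω/c)), is a strictly increasing smooth bijection from ℝ onto ℝ. -/

import Mathlib

open Real Filter

/-- Inverse hyperbolic tangent: `arctanh x = (1/2) ln((1+x)/(1-x))`. -/
noncomputable def arctanh (x : ℝ) : ℝ := (1 / 2) * Real.log ((1 + x) / (1 - x))

lemma abs_tanh_lt_one' (x : ℝ) : |Real.tanh x| < 1 := by
  rw [Real.tanh_eq_sinh_div_cosh, abs_div, abs_of_pos (Real.cosh_pos x),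
    div_lt_one (Real.cosh_pos x), abs_lt]
  constructor
  · nlinarith [Real.cosh_add_sinh x, Real.exp_pos x]
  · nlinarith [Real.cosh_sub_sinh x, Real.exp_pos (-x)]

lemma log_cosh_le_abs (x : ℝ) : Real.log (Real.cosh x) ≤ |x| := by
  have h : Real.cosh x ≤ Real.exp |x| := by
    rw [Real.cosh_eq]
    have h1 : Real.exp x ≤ Real.exp |x| := Real.exp_le_exp.2 (le_abs_self x)
    have h2 : Real.exp (-x) ≤ Real.exp |x| := Real.exp_le_exp.2 (neg_le_abs x)
    linarith
  calc Real.log (Real.cosh x) ≤ Real.log (Real.exp |x|) :=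
        Real.log_le_log (Real.cosh_pos x) h
    _ = |x| := Real.log_exp _

lemma abs_sub_log_two_le_log_cosh (x : ℝ) : |x| - Real.log 2 ≤ Real.log (Real.cosh x) := by
  have h : Real.exp (|x| - Real.log 2) ≤ Real.cosh x := by
    rw [Real.exp_sub, Real.exp_log two_pos, Real.cosh_eq]
    have h1 : (0:ℝ) < Real.exp x := Real.exp_pos x
    have h2 : (0:ℝ) < Real.exp (-x) := Real.exp_pos (-x)
    rcases abs_cases x with ⟨h, _⟩ | ⟨h, _⟩ <;> rw [h] <;> linarith
  calc |x| - Real.log 2 = Real.log (Real.exp (|x| - Real.log 2)) := (Real.log_exp _).symm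
    _ ≤ Real.log (Real.cosh x) := Real.log_le_log (Real.exp_pos _) h

/-- For `ω > 0`, `c > 2ω`, the map
`ξ(θ) = √(4c/(c-2ω)) θ + ln(cosh(θ - θ₀)/cosh(θ + θ₀))` with
`θ₀ = arctanh(√(1 - 2ω/c))` is a strictly increasing smooth bijection of `ℝ`
onto itself, with `ξ'(θ) > 0` everywhere and `ξ(θ) → ±∞` as `θ → ±∞`. -/
theorem stmt7 (ω c : ℝ) (hω : 0 < ω) (hc : 2 * ω < c)
    (θ₀ : ℝ) (hθ₀ : θ₀ = arctanh (Real.sqrt (1 - 2 * ω / c)))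
    (ξ : ℝ → ℝ)
    (hξ : ∀ θ : ℝ, ξ θ = Real.sqrt (4 * c / (c - 2 * ω)) * θ
      + Real.log (Real.cosh (θ - θ₀) / Real.cosh (θ + θ₀))) :
    StrictMono ξ ∧ ContDiff ℝ (⊤ : ℕ∞) ξ ∧ Function.Bijective ξ ∧
    (∀ θ : ℝ, 0 < deriv ξ θ) ∧
    Tendsto ξ atTop atTop ∧ Tendsto ξ atBot atBot := by
  set a : ℝ := Real.sqrt (4 * c / (c - 2 * ω)) with ha_def
  have hc2 : 0 < c - 2 * ω := by linarith
  have hcpos : 0 < c := by linarith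
  have ha2 : 2 < a := by
    have h4 : (4 : ℝ) < 4 * c / (c - 2 * ω) := by
      rw [lt_div_iff₀ hc2]; nlinarith
    have h5 : Real.sqrt 4 < a := Real.sqrt_lt_sqrt (by norm_num) h4
    have h6 : Real.sqrt 4 = 2 := by
      rw [show (4:ℝ) = 2^2 by norm_num, Real.sqrt_sq (by norm_num : (0:ℝ) ≤ 2)]
    linarith
  -- rewrite ξ
  have hξ' : ξ = fun θ => a * θ + (Real.log (Real.cosh (θ - θ₀))
      - Real.log (Real.cosh (θ + θ₀))) := by
    funext θ
    rw [hξ θ, Real.log_div (Real.cosh_pos _).ne' (Real.cosh_pos _).ne']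
  -- derivative
  have hderiv : ∀ θ : ℝ, HasDerivAt ξ
      (a + (Real.tanh (θ - θ₀) - Real.tanh (θ + θ₀))) θ := by
    intro θ
    rw [hξ']
    have h1 : HasDerivAt (fun θ : ℝ => Real.log (Real.cosh (θ - θ₀)))
        (Real.tanh (θ - θ₀)) θ := by
      have := ((Real.hasDerivAt_cosh (θ - θ₀)).comp θ
        ((hasDerivAt_id θ).sub_const θ₀)).log (by exact (Real.cosh_pos _).ne')
      simpa [Real.tanh_eq_sinh_div_cosh] using this
    have h2 : HasDerivAt (fun θ : ℝ => Real.log (Real.cosh (θ + θ₀)))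
        (Real.tanh (θ + θ₀)) θ := by
      have := ((Real.hasDerivAt_cosh (θ + θ₀)).comp θ
        ((hasDerivAt_id θ).add_const θ₀)).log (by exact (Real.cosh_pos _).ne')
      simpa [Real.tanh_eq_sinh_div_cosh] using this
    have h3 := ((hasDerivAt_id θ).const_mul a).add (h1.sub h2)
    simp only [mul_one] at h3
    exact h3
  have hderivpos : ∀ θ : ℝ, 0 < deriv ξ θ := by
    intro θ
    rw [(hderiv θ).deriv]
    have t1 := abs_lt.1 (abs_tanh_lt_one' (θ - θ₀))
    have t2 := abs_lt.1 (abs_tanh_lt_one' (θ + θ₀))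
    linarith
  have hsm : StrictMono ξ :=
    strictMono_of_deriv_pos hderivpos
  have hcd : ContDiff ℝ (⊤ : ℕ∞) ξ := by
    rw [hξ']
    have h1 : ContDiff ℝ (⊤ : ℕ∞) (fun θ : ℝ => Real.log (Real.cosh (θ - θ₀))) :=
      (Real.contDiff_cosh.comp (contDiff_id.sub contDiff_const)).log
        (fun θ => (Real.cosh_pos _).ne')
    have h2 : ContDiff ℝ (⊤ : ℕ∞) (fun θ : ℝ => Real.log (Real.cosh (θ + θ₀))) :=
      (Real.contDiff_cosh.comp (contDiff_id.add contDiff_const)).log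
        (fun θ => (Real.cosh_pos _).ne')
    exact (contDiff_const.mul contDiff_id).add (h1.sub h2)
  -- growth bounds
  have hlow : ∀ θ : ℝ, a * θ - (2 * |θ₀| + Real.log 2) ≤ ξ θ := by
    intro θ
    rw [hξ']
    have b1 := abs_sub_log_two_le_log_cosh (θ - θ₀)
    have b2 := log_cosh_le_abs (θ + θ₀)
    have tri : |θ + θ₀| - |θ - θ₀| ≤ 2 * |θ₀| := by
      have := abs_sub_abs_le_abs_sub (θ + θ₀) (θ - θ₀)
      have h : |θ + θ₀ - (θ - θ₀)| = 2 * |θ₀| := by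
        rw [show θ + θ₀ - (θ - θ₀) = 2 * θ₀ by ring, abs_mul]
        norm_num
      linarith
    simp only; linarith
  have hhigh : ∀ θ : ℝ, ξ θ ≤ a * θ + (2 * |θ₀| + Real.log 2) := by
    intro θ
    rw [hξ']
    have b1 := log_cosh_le_abs (θ - θ₀)
    have b2 := abs_sub_log_two_le_log_cosh (θ + θ₀)
    have tri : |θ - θ₀| - |θ + θ₀| ≤ 2 * |θ₀| := by
      have := abs_sub_abs_le_abs_sub (θ - θ₀) (θ + θ₀)
      have h : |θ - θ₀ - (θ + θ₀)| = 2 * |θ₀| := by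
        rw [show θ - θ₀ - (θ + θ₀) = -(2 * θ₀) by ring, abs_neg, abs_mul]
        norm_num
      linarith
    simp only; linarith
  have hapos : (0:ℝ) < a := by linarith
  have hlin_top : Tendsto (fun θ : ℝ => a * θ - (2 * |θ₀| + Real.log 2)) atTop atTop :=
    (tendsto_id.const_mul_atTop hapos).atTop_add tendsto_const_nhds
  have hlin_bot : Tendsto (fun θ : ℝ => a * θ + (2 * |θ₀| + Real.log 2)) atBot atBot :=
    (tendsto_id.const_mul_atBot hapos).atBot_add tendsto_const_nhds
  have htop : Tendsto ξ atTop atTop := tendsto_atTop_mono hlow hlin_top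
  have hbot : Tendsto ξ atBot atBot := tendsto_atBot_mono hhigh hlin_bot
  have hbij : Function.Bijective ξ :=
    ⟨hsm.injective, (hcd.continuous).surjective htop hbot⟩
  exact ⟨hsm, hcd, hbij, hderivpos, htop, hbot⟩
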